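/- Let n ≥ 1, p ∈ (0,1), and let f_n be the cluster-size function at the root of the perfect binary tree of depth n. Let A ⊆ B_n be nonempty. If there is no vertex v ∈ V_n with A ⊆ P_v, then ⟨f_n, Ψ_A^{p,B_n}⟩_{p,B_n} = 0. Otherwise, letting d_A be the maximal depth of an endpoint of an edge of A: ⟨f_n, Ψ_A^{p,B_n}⟩_{p,B_n} = ν_p^{|A|} · p^{d_A} · (1 − (2p)^{n−d_A+1})/(1 − 2p) when p ≠ 1/2, and = 2^{−d_A}(n − d_A + 1) when p = 1/2. -/

import Mathlib

open Finset Filter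

noncomputable section
open scoped Classical

/-- Edges on the path from the root to vertex `v`, in heap indexing of the infinite binary
tree: the root is `0`, the children of `v` are `2v+1` and `2v+2`, and each non-root vertex
is identified with the edge joining it to its parent `(v−1)/2`. -/
def pathSet : ℕ → Finset ℕ
  | 0 => ∅
  | (v + 1) => insert (v + 1) (pathSet (v / 2))
decreasing_by exact Nat.lt_succ_of_le (Nat.div_le_self v 2)

/-- The depth of vertex `v`. -/
def depth (v : ℕ) : ℕ := Nat.log2 (v + 1)

/-- The edge set B_n of the perfect binary tree of depth `n` (its vertex set is
{0,…,2^{n+1}−2} and each non-root vertex is identified with the edge to its parent),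
so |B_n| = 2^{n+1} − 2. -/
def Eset (n : ℕ) : Finset ℕ := Finset.Icc 1 (2 ^ (n + 1) - 2)

/-- ν_p = √((1-p)/p). -/
def nu (p : ℝ) : ℝ := Real.sqrt ((1 - p) / p)

/-- Ψ_A^{p,B_n}(x) = Π_{i∈A} x_i ν_p^{x_i}: a configuration is encoded by the set `x` of
open edges; the factor is ν_p when the edge is open (+1) and −ν_p⁻¹ when closed (−1). -/
def PsiT (p : ℝ) (A x : Finset ℕ) : ℝ :=
  ∏ i ∈ A, (if i ∈ x then nu p else -(nu p)⁻¹)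

/-- The Bernoulli product measure π_{p,B_n} of the configuration with open-edge set `x`. -/
def piT (p : ℝ) (n : ℕ) (x : Finset ℕ) : ℝ :=
  p ^ x.card * (1 - p) ^ ((Eset n).card - x.card)

/-- The inner product ⟨f,g⟩_{p,B_n} = Σ_{x⊆B_n} f(x) g(x) π_{p,B_n}(x). -/
def innT (p : ℝ) (n : ℕ) (f g : Finset ℕ → ℝ) : ℝ :=
  ∑ x ∈ (Eset n).powerset, f x * g x * piT p n x

/-- The cluster-size function f_n(x) = Σ_{v∈V_n} Π_{e∈P_v} (1+x_e)/2: the number of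
vertices of the depth-n perfect binary tree joined to the root by open edges. -/
def fcl (n : ℕ) (x : Finset ℕ) : ℝ :=
  ∑ v ∈ Finset.range (2 ^ (n + 1) - 1), ∏ e ∈ pathSet v, (if e ∈ x then (1 : ℝ) else 0)

/-- var_p(f_n) = Σ_{∅≠A⊆B_n} ⟨f_n,Ψ_A⟩². -/
def varT (p : ℝ) (n : ℕ) : ℝ :=
  ∑ A ∈ (Eset n).powerset.filter (fun A => A.Nonempty), (innT p n (fcl n) (PsiT p A)) ^ 2

/-- g_{p,n}(d). -/
def gtree (p : ℝ) (n d : ℕ) : ℝ :=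
  if p = 1 / 2 then ((2 : ℝ) ^ (2 * d))⁻¹ * ((n + 1 - d : ℕ) : ℝ) ^ 2
  else p ^ (2 * d) * ((1 - (2 * p) ^ (n + 1 - d)) / (1 - 2 * p)) ^ 2

lemma mem_pathSet {e : ℕ} : ∀ v, e ∈ pathSet v ↔ 1 ≤ e ∧ ∃ k, e + 1 = (v + 1) / 2 ^ k := by
  intro v
  induction v using Nat.strong_induction_on with
  | _ v ih =>
    match v with
    | 0 =>
      simp [pathSet]
      intro he k h
      have : (1:ℕ) / 2 ^ k ≤ 1 := Nat.div_le_self _ _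
      omega
    | (v+1) =>
      rw [pathSet]
      have hparent : v / 2 + 1 = (v + 1 + 1) / 2 := by omega
      rw [Finset.mem_insert, ih (v/2) (Nat.lt_succ_of_le (Nat.div_le_self v 2))]
      constructor
      · rintro (rfl | ⟨h1, k, hk⟩)
        · exact ⟨by omega, 0, by simp⟩
        · refine ⟨h1, k + 1, ?_⟩
          rw [hk, hparent, pow_succ, Nat.div_div_eq_div_mul]
          ring_nf
      · rintro ⟨h1, k, hk⟩
        match k with
        | 0 => left; simpa using hk
        | (k+1) =>
          right
          refine ⟨h1, k, ?_⟩
          rw [hk, hparent, pow_succ, Nat.div_div_eq_div_mul]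
          ring_nf

lemma le_of_mem_pathSet {e v : ℕ} (h : e ∈ pathSet v) : 1 ≤ e ∧ e ≤ v := by
  rw [mem_pathSet] at h
  obtain ⟨h1, k, hk⟩ := h
  have : (v+1)/2^k ≤ v + 1 := Nat.div_le_self _ _
  omega

lemma self_mem_pathSet {v : ℕ} (h : 1 ≤ v) : v ∈ pathSet v := by
  rw [mem_pathSet]; exact ⟨h, 0, by simp⟩

lemma pathSet_trans {a w v : ℕ} (ha : a ∈ pathSet w) (hw : w ∈ pathSet v) : a ∈ pathSet v := by
  rw [mem_pathSet] at *
  obtain ⟨h1, j, hj⟩ := ha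
  obtain ⟨h2, k, hk⟩ := hw
  exact ⟨h1, k + j, by rw [hj, hk, pow_add, ← Nat.div_div_eq_div_mul]⟩

lemma mem_pathSet_of_le {a b v : ℕ} (ha : a ∈ pathSet v) (hb : b ∈ pathSet v) (hab : a ≤ b) :
    a ∈ pathSet b := by
  rw [mem_pathSet] at ha hb ⊢
  obtain ⟨h1, j, hj⟩ := ha
  obtain ⟨h2, k, hk⟩ := hb
  rcases le_or_gt k j with h | h
  · refine ⟨h1, j - k, ?_⟩
    rw [hj, hk, Nat.div_div_eq_div_mul, ← pow_add]
    congr 2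
    omega
  · have hle : (v+1)/2^k ≤ (v+1)/2^j :=
      Nat.div_le_div_left (Nat.pow_le_pow_right (by norm_num) h.le) (Nat.two_pow_pos _)
    have : a = b := by omega
    subst this
    exact ⟨h1, 0, by simp⟩

lemma card_pathSet : ∀ v, (pathSet v).card = depth v := by
  intro v
  induction v using Nat.strong_induction_on with
  | _ v ih =>
    match v with
    | 0 => simp [pathSet, depth, Nat.log2]; rfl
    | (v+1) =>
      rw [pathSet, Finset.card_insert_of_notMem, ih (v/2) (Nat.lt_succ_of_le (Nat.div_le_self v 2))]
      · have hparent : v / 2 + 1 = (v + 1 + 1) / 2 := by omega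
        rw [depth, depth, hparent]
        conv_rhs => rw [Nat.log2_def]
        simp only [show 2 ≤ v + 1 + 1 by omega, if_pos]
      · intro h
        have := le_of_mem_pathSet h
        omega

lemma depth_le_of_mem_pathSet {a v : ℕ} (h : a ∈ pathSet v) : depth a ≤ depth v := by
  have := (le_of_mem_pathSet h).2
  calc depth a = Nat.log 2 (a+1) := by rw [depth, Nat.log2_eq_log_two]
    _ ≤ Nat.log 2 (v+1) := Nat.log_mono_right (by omega)
    _ = depth v := by rw [depth, Nat.log2_eq_log_two]

lemma depth_spec (w : ℕ) : 2 ^ depth w ≤ w + 1 ∧ w + 1 < 2 ^ (depth w + 1) := by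
  rw [depth, Nat.log2_eq_log_two]
  exact ⟨Nat.pow_log_le_self 2 (by omega), Nat.lt_pow_succ_log_self (by norm_num) _⟩

lemma depth_of_range {w k r : ℕ} (hr : r < 2 ^ k) :
    depth ((w + 1) * 2 ^ k + r - 1) = depth w + k := by
  have hs := depth_spec w
  have h1 : 2 ^ (depth w + k) ≤ (w + 1) * 2 ^ k + r := by
    calc 2 ^ (depth w + k) = 2 ^ depth w * 2 ^ k := by rw [pow_add]
    _ ≤ (w + 1) * 2 ^ k := Nat.mul_le_mul_right _ hs.1
    _ ≤ _ := Nat.le_add_right _ _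
  have h2 : (w + 1) * 2 ^ k + r < 2 ^ (depth w + k + 1) := by
    calc (w + 1) * 2 ^ k + r < (w + 1) * 2 ^ k + 2 ^ k := by omega
    _ = (w + 2) * 2 ^ k := by ring
    _ ≤ 2 ^ (depth w + 1) * 2 ^ k := Nat.mul_le_mul_right _ (by omega)
    _ = 2 ^ (depth w + k + 1) := by rw [← pow_add]; ring_nf
  have hpos : 1 ≤ (w + 1) * 2 ^ k + r := by
    have : 0 < (w + 1) * 2 ^ k := by positivity
    omega
  rw [depth, Nat.log2_eq_log_two, Nat.sub_add_cancel hpos]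
  exact Nat.log_eq_of_pow_le_of_lt_pow h1 h2

lemma sum_descendants (w n : ℕ) (hw : 1 ≤ w) (hwn : depth w ≤ n) (c : ℕ → ℝ) :
    ∑ v ∈ Finset.range (2 ^ (n + 1) - 1), (if w ∈ pathSet v then c (depth v) else 0)
    = ∑ k ∈ Finset.range (n - depth w + 1), 2 ^ k * c (depth w + k) := by
  rw [← Finset.sum_filter]
  set T := (Finset.range (n - depth w + 1)).sigma (fun k => Finset.range (2 ^ k)) with hT
  have himg : (Finset.range (2 ^ (n + 1) - 1)).filter (fun v => w ∈ pathSet v)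
      = T.image (fun q => (w + 1) * 2 ^ q.1 + q.2 - 1) := by
    ext v
    simp only [Finset.mem_filter, Finset.mem_range, Finset.mem_image, Finset.mem_sigma, hT]
    constructor
    · rintro ⟨hv, hmem⟩
      rw [mem_pathSet] at hmem
      obtain ⟨-, k, hk⟩ := hmem
      have hdvd : (v + 1) = (w + 1) * 2 ^ k + (v + 1) % 2 ^ k := by
        conv_lhs => rw [← Nat.div_add_mod (v + 1) (2 ^ k)]
        rw [← hk]; ring
      have hr : (v + 1) % 2 ^ k < 2 ^ k := Nat.mod_lt _ (Nat.two_pow_pos _)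
      have hge : 2 ^ (depth w + k) ≤ v + 1 := by
        calc 2 ^ (depth w + k) = 2 ^ depth w * 2 ^ k := by rw [pow_add]
        _ ≤ (w + 1) * 2 ^ k := Nat.mul_le_mul_right _ (depth_spec w).1
        _ ≤ v + 1 := by omega
      have hlt : depth w + k ≤ n := by
        by_contra hcon
        have : 2 ^ (n + 1) ≤ 2 ^ (depth w + k) := Nat.pow_le_pow_right (by norm_num) (by omega)
        have h2 : 2 ≤ 2 ^ (n+1) := Nat.le_self_pow (by omega) 2
        omega
      refine ⟨⟨k, (v + 1) % 2 ^ k⟩, ⟨?_, ?_⟩, ?_⟩ <;> dsimp only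
      · omega
      · exact hr
      · omega
    · rintro ⟨⟨k, r⟩, ⟨hk, hr⟩, rfl⟩
      dsimp only at hk hr ⊢
      have hs := depth_spec w
      have hw2 : (w + 2) * 2 ^ k = (w + 1) * 2 ^ k + 2 ^ k := by ring
      have hlt : (w + 1) * 2 ^ k + r < 2 ^ (n + 1) := by
        calc (w + 1) * 2 ^ k + r < (w + 2) * 2 ^ k := by omega
        _ ≤ 2 ^ (depth w + 1) * 2 ^ k := Nat.mul_le_mul_right _ (by omega)
        _ = 2 ^ (depth w + 1 + k) := by rw [← pow_add]
        _ ≤ 2 ^ (n + 1) := Nat.pow_le_pow_right (by norm_num) (by omega)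
      have hposm : 0 < (w + 1) * 2 ^ k := by positivity
      constructor
      · have h2 : 2 ≤ 2 ^ (n+1) := Nat.le_self_pow (by omega) 2
        omega
      · rw [mem_pathSet]
        refine ⟨hw, k, ?_⟩
        rw [Nat.sub_add_cancel (by omega)]
        rw [show (w + 1) * 2 ^ k + r = 2 ^ k * (w + 1) + r by ring,
          Nat.mul_add_div (Nat.two_pow_pos _), Nat.div_eq_of_lt hr]
  rw [himg, Finset.sum_image]
  · rw [Finset.sum_sigma]
    refine Finset.sum_congr rfl (fun k hk => ?_)
    have : ∀ r ∈ Finset.range (2 ^ k), c (depth ((w + 1) * 2 ^ k + r - 1)) = c (depth w + k) := by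
      intro r hr
      rw [depth_of_range (Finset.mem_range.mp hr)]
    rw [Finset.sum_congr rfl this, Finset.sum_const, Finset.card_range, nsmul_eq_mul]
    norm_num
  · rintro ⟨k, r⟩ hkr ⟨k', r'⟩ hkr' heq
    simp only [Finset.mem_coe, hT, Finset.mem_sigma, Finset.mem_range] at hkr hkr'
    dsimp only at heq
    have h1 : depth ((w + 1) * 2 ^ k + r - 1) = depth w + k := depth_of_range hkr.2
    have h2 : depth ((w + 1) * 2 ^ k' + r' - 1) = depth w + k' := depth_of_range hkr'.2
    rw [heq] at h1
    have hkk : k = k' := by omega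
    subst hkk
    have hposm : 0 < (w + 1) * 2 ^ k := by positivity
    have : r = r' := by omega
    simp [this]

lemma nu_pos {p : ℝ} (hp0 : 0 < p) (hp1 : p < 1) : 0 < nu p :=
  Real.sqrt_pos.mpr (div_pos (by linarith) hp0)

lemma nu_sq {p : ℝ} (hp0 : 0 < p) (hp1 : p < 1) : nu p ^ 2 = (1 - p) / p :=
  Real.sq_sqrt (le_of_lt (div_pos (by linarith) hp0))

lemma key_zero {p : ℝ} (hp0 : 0 < p) (hp1 : p < 1) :
    p * nu p + (1 - p) * (-(nu p)⁻¹) = 0 := by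
  have h1 := nu_pos hp0 hp1
  have h3 : p * nu p * nu p = 1 - p := by
    have h2 := nu_sq hp0 hp1
    rw [sq] at h2
    rw [mul_assoc, h2]
    field_simp
  field_simp
  nlinarith [h3]

lemma inner_term (p : ℝ) (hp0 : 0 < p) (hp1 : p < 1) (n : ℕ) (A : Finset ℕ) (hA : A ⊆ Eset n)
    (v : ℕ) (hPv : pathSet v ⊆ Eset n) :
    ∑ x ∈ (Eset n).powerset,
      (∏ e ∈ pathSet v, (if e ∈ x then (1 : ℝ) else 0)) * PsiT p A x * piT p n x
    = if A ⊆ pathSet v then nu p ^ A.card * p ^ depth v else 0 := by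
  set B := Eset n with hB
  set a : ℕ → ℝ := fun e => p * (if e ∈ A then nu p else 1) with ha
  set b : ℕ → ℝ := fun e =>
    (if e ∈ pathSet v then 0 else 1) * ((1 - p) * (if e ∈ A then -(nu p)⁻¹ else 1)) with hb
  have step1 : ∀ x ∈ B.powerset,
      (∏ e ∈ pathSet v, (if e ∈ x then (1 : ℝ) else 0)) * PsiT p A x * piT p n x
      = (∏ e ∈ x, a e) * (∏ e ∈ B \ x, b e) := by
    intro x hx
    rw [Finset.mem_powerset] at hx
    have hind : (∏ e ∈ pathSet v, (if e ∈ x then (1 : ℝ) else 0))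
        = ∏ e ∈ B, (if e ∈ pathSet v then (if e ∈ x then (1 : ℝ) else 0) else 1) := by
      rw [← Finset.prod_subset hPv (fun e _ he => if_neg he)]
      exact Finset.prod_congr rfl (fun e he => (if_pos he).symm)
    have hpsi : PsiT p A x
        = ∏ e ∈ B, (if e ∈ A then (if e ∈ x then nu p else -(nu p)⁻¹) else 1) := by
      rw [PsiT, ← Finset.prod_subset hA (fun e _ he => if_neg he)]
      exact Finset.prod_congr rfl (fun e he => (if_pos he).symm)
    have hpi : piT p n x = ∏ e ∈ B, (if e ∈ x then p else 1 - p) := by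
      have h1 : ∏ e ∈ x, (if e ∈ x then p else 1 - p) = p ^ x.card := by
        rw [Finset.prod_congr rfl (fun e he => if_pos he), Finset.prod_const]
      have h2 : ∏ e ∈ B \ x, (if e ∈ x then p else 1 - p)
          = (1 - p) ^ (B.card - x.card) := by
        rw [Finset.prod_congr rfl (fun e he => if_neg (Finset.mem_sdiff.mp he).2),
          Finset.prod_const, Finset.card_sdiff_of_subset hx]
      rw [piT, ← Finset.prod_sdiff hx, h1, h2]
      ring
    rw [hind, hpsi, hpi, ← Finset.prod_mul_distrib, ← Finset.prod_mul_distrib,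
      ← Finset.prod_sdiff hx, mul_comm]
    congr 1
    · refine Finset.prod_congr rfl (fun e he => ?_)
      by_cases hev : e ∈ pathSet v <;> by_cases heA : e ∈ A <;>
        simp [ha, hev, heA, he] <;> ring
    · refine Finset.prod_congr rfl (fun e he => ?_)
      have hex : e ∉ x := (Finset.mem_sdiff.mp he).2
      by_cases hev : e ∈ pathSet v <;> by_cases heA : e ∈ A <;>
        simp [hb, hev, heA, hex] <;> ring
  rw [Finset.sum_congr rfl step1, ← Finset.prod_add]
  by_cases hAP : A ⊆ pathSet v
  · rw [if_pos hAP]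
    have houter : ∀ e ∈ B, e ∉ pathSet v → a e + b e = 1 := by
      intro e _ hev
      have heA : e ∉ A := fun h => hev (hAP h)
      simp only [ha, hb, if_neg hev, if_neg heA]
      ring
    rw [← Finset.prod_subset hPv houter]
    have hinner : ∀ e ∈ pathSet v, a e + b e = p * (if e ∈ A then nu p else 1) := by
      intro e hev
      simp only [ha, hb, if_pos hev]
      ring
    rw [Finset.prod_congr rfl hinner, Finset.prod_mul_distrib, Finset.prod_const,
      card_pathSet]
    have : ∏ e ∈ pathSet v, (if e ∈ A then nu p else 1) = nu p ^ A.card := by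
      rw [← Finset.prod_subset hAP (fun e _ he => if_neg he),
        Finset.prod_congr rfl (fun e (he : e ∈ A) => if_pos he), Finset.prod_const]
    rw [this, mul_comm]
  · rw [if_neg hAP]
    obtain ⟨e0, he0A, he0P⟩ := Finset.not_subset.mp hAP
    refine Finset.prod_eq_zero (hA he0A) ?_
    simp only [ha, hb, if_pos he0A, if_neg he0P]
    have := key_zero hp0 hp1
    linarith [this]

lemma pathSet_subset_Eset {n v : ℕ} (hv : v ∈ Finset.range (2 ^ (n + 1) - 1)) :
    pathSet v ⊆ Eset n := by
  intro e he
  have h1 := le_of_mem_pathSet he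
  rw [Finset.mem_range] at hv
  rw [Eset, Finset.mem_Icc]
  omega

lemma inn_fcl (p : ℝ) (hp0 : 0 < p) (hp1 : p < 1) (n : ℕ) (A : Finset ℕ) (hA : A ⊆ Eset n) :
    innT p n (fcl n) (PsiT p A)
    = ∑ v ∈ Finset.range (2 ^ (n + 1) - 1),
        (if A ⊆ pathSet v then nu p ^ A.card * p ^ depth v else 0) := by
  rw [innT]
  have hswap : ∀ x ∈ (Eset n).powerset, fcl n x * PsiT p A x * piT p n x
      = ∑ v ∈ Finset.range (2 ^ (n + 1) - 1),
          (∏ e ∈ pathSet v, (if e ∈ x then (1 : ℝ) else 0)) * PsiT p A x * piT p n x := by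
    intro x _
    rw [fcl, Finset.sum_mul, Finset.sum_mul]
  rw [Finset.sum_congr rfl hswap, Finset.sum_comm]
  exact Finset.sum_congr rfl fun v hv =>
    inner_term p hp0 hp1 n A hA v (pathSet_subset_Eset hv)


theorem tree_fourier_coefficient' (n : ℕ) (hn : 1 ≤ n) (p : ℝ) (hp0 : 0 < p) (hp1 : p < 1)
    (A : Finset ℕ) (hA : A ⊆ Eset n) (hne : A.Nonempty) :
    ((¬ ∃ v ∈ Finset.range (2 ^ (n + 1) - 1), A ⊆ pathSet v) →
        innT p n (fcl n) (PsiT p A) = 0)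
    ∧ ((∃ v ∈ Finset.range (2 ^ (n + 1) - 1), A ⊆ pathSet v) →
        innT p n (fcl n) (PsiT p A) =
          if p = 1 / 2 then
            ((2 : ℝ) ^ (A.sup depth))⁻¹ * ((n - A.sup depth + 1 : ℕ) : ℝ)
          else
            nu p ^ A.card * p ^ (A.sup depth) *
              (1 - (2 * p) ^ (n - A.sup depth + 1)) / (1 - 2 * p)) := by
  constructor
  · intro hno
    push_neg at hno
    rw [inn_fcl p hp0 hp1 n A hA]
    exact Finset.sum_eq_zero fun v hv => if_neg (hno v hv)
  · rintro ⟨v₀, hv₀r, hv₀⟩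
    set w := A.max' hne with hwdef
    have hwA : w ∈ A := A.max'_mem hne
    have hw1 : 1 ≤ w := by
      have := hA hwA
      rw [Eset, Finset.mem_Icc] at this
      exact this.1
    have hAw : A ⊆ pathSet w := fun a ha =>
      mem_pathSet_of_le (hv₀ ha) (hv₀ hwA) (A.le_max' a ha)
    have hsup : A.sup depth = depth w :=
      le_antisymm (Finset.sup_le fun a ha => depth_le_of_mem_pathSet (hAw ha))
        (Finset.le_sup hwA)
    have hiff : ∀ v, (A ⊆ pathSet v) ↔ w ∈ pathSet v := fun v =>
      ⟨fun h => h hwA, fun h a ha => pathSet_trans (hAw ha) h⟩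
    have hwn : depth w ≤ n := by
      have hmem := hA hwA
      rw [Eset, Finset.mem_Icc] at hmem
      have hs := depth_spec w
      by_contra hcon
      have h1 : 2 ^ (n + 1) ≤ 2 ^ depth w := Nat.pow_le_pow_right (by norm_num) (by omega)
      have h2 : 2 ≤ 2 ^ (n + 1) := Nat.le_self_pow (by omega) 2
      omega
    rw [inn_fcl p hp0 hp1 n A hA]
    have hstep : ∀ v ∈ Finset.range (2 ^ (n + 1) - 1),
        (if A ⊆ pathSet v then nu p ^ A.card * p ^ depth v else 0)
        = (if w ∈ pathSet v then nu p ^ A.card * p ^ depth v else 0) := by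
      intro v _
      simp only [hiff v]
    rw [Finset.sum_congr rfl hstep,
      sum_descendants w n hw1 hwn (fun d => nu p ^ A.card * p ^ d)]
    have hterm : ∀ k ∈ Finset.range (n - depth w + 1),
        (2 : ℝ) ^ k * (nu p ^ A.card * p ^ (depth w + k))
        = nu p ^ A.card * p ^ depth w * (2 * p) ^ k := by
      intro k _
      rw [mul_pow, pow_add]
      ring
    rw [Finset.sum_congr rfl hterm, ← Finset.mul_sum]
    rw [hsup]
    by_cases hhalf : p = 1 / 2
    · rw [if_pos hhalf]
      subst hhalf
      have hnu1 : nu (1 / 2) = 1 := by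
        rw [nu]
        norm_num
      have hgeom : ∑ k ∈ Finset.range (n - depth w + 1), (2 * (1 / 2 : ℝ)) ^ k
          = ((n - depth w + 1 : ℕ) : ℝ) := by
        norm_num
      rw [hgeom, hnu1, one_pow, one_mul]
      congr 1
      rw [div_pow, one_pow]
      norm_num
    · rw [if_neg hhalf]
      have h2p : (2 : ℝ) * p ≠ 1 := by
        intro h
        apply hhalf
        linarith
      rw [geom_sum_eq h2p]
      have hden : (2 : ℝ) * p - 1 ≠ 0 := fun h => h2p (by linarith)
      have hden' : (1 : ℝ) - 2 * p ≠ 0 := fun h => h2p (by linarith)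
      field_simp
      ring

/-- Fourier coefficients of the cluster size on the tree. If no vertex v has
A ⊆ P_v then ⟨f_n,Ψ_A⟩ = 0; otherwise, with d_A the maximal depth of an endpoint of an
edge of A, ⟨f_n,Ψ_A⟩ = ν_p^{|A|} p^{d_A} (1−(2p)^{n−d_A+1})/(1−2p) for p ≠ 1/2, and
⟨f_n,Ψ_A⟩ = 2^{−d_A}(n−d_A+1) for p = 1/2. -/
theorem tree_fourier_coefficient (n : ℕ) (hn : 1 ≤ n) (p : ℝ) (hp0 : 0 < p) (hp1 : p < 1)
    (A : Finset ℕ) (hA : A ⊆ Eset n) (hne : A.Nonempty) :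
    ((¬ ∃ v ∈ Finset.range (2 ^ (n + 1) - 1), A ⊆ pathSet v) →
        innT p n (fcl n) (PsiT p A) = 0)
    ∧ ((∃ v ∈ Finset.range (2 ^ (n + 1) - 1), A ⊆ pathSet v) →
        innT p n (fcl n) (PsiT p A) =
          if p = 1 / 2 then
            ((2 : ℝ) ^ (A.sup depth))⁻¹ * ((n - A.sup depth + 1 : ℕ) : ℝ)
          else
            nu p ^ A.card * p ^ (A.sup depth) *
              (1 - (2 * p) ^ (n - A.sup depth + 1)) / (1 - 2 * p)) :=
  tree_fourier_coefficient' n hn p hp0 hp1 A hA hne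

end
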